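/- Let V and W be finite-dimensional complex vector spaces, A, B ∈ End(V) nilpotent endomorphisms, Γ ∈ Hom(W,V) and Δ ∈ Hom(V,W), and suppose BA - AB = ΓΔ. Then the polynomials X(z) = id_W - Σ_{j,k ≥ 0} Δ A^j B^k Γ z^{j+k+2} and Y(z) = id_W + Σ_{j,k ≥ 0} Δ B^k A^j Γ z^{j+k+2} in End(W)[z] are two-sided inverses of each other. -/

import Mathlib

/-!
In `End(V)[z]` the elements `u = 1 - Az` and `v = 1 - Bz` are units whose inverses are the
truncated geometric series in `Az` and `Bz`, and the moment map equation reads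
`ΓΔ z² = vu - uv`. The double sums in `X` and `Y` are `ψ((vu)⁻¹)` and `ψ((uv)⁻¹)` for the additive
map `ψ(P) = Δ P Γ z²`, which satisfies `ψ(P) ψ(Q) = ψ(P ΓΔ z² Q)`. For units `a, b` both
`a⁻¹ (a - b) b⁻¹` and `b⁻¹ (a - b) a⁻¹` equal `b⁻¹ - a⁻¹`; with `a = vu`, `b = uv` this gives
`ST = TS = T - S` for `S = ψ(a⁻¹)`, `T = ψ(b⁻¹)`, hence `(1 - S)(1 + T) = (1 + T)(1 - S) = 1`.
-/

open Polynomial Finset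

def Units.oneSubOfPowEqZero {R : Type*} [Ring R] {x : R} {n : ℕ} (h : x ^ n = 0) : Rˣ where
  val := 1 - x
  inv := ∑ i ∈ range n, x ^ i
  val_inv := by rw [mul_neg_geom_sum, h, sub_zero]
  inv_val := by rw [geom_sum_mul_neg, h, sub_zero]

lemma Units.inv_mul_sub_mul_inv {R : Type*} [Ring R] (a b : Rˣ) :
    ↑a⁻¹ * (↑a - ↑b) * ↑b⁻¹ = (↑b⁻¹ - ↑a⁻¹ : R) := by
  rw [mul_sub, sub_mul, Units.inv_mul, one_mul, Units.mul_inv_cancel_right]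

lemma Units.inv_mul_sub_mul_inv' {R : Type*} [Ring R] (a b : Rˣ) :
    ↑b⁻¹ * (↑a - ↑b) * ↑a⁻¹ = (↑b⁻¹ - ↑a⁻¹ : R) := by
  rw [mul_sub, sub_mul, Units.mul_inv_cancel_right, Units.inv_mul, one_mul]

lemma one_sub_mul_one_add_eq_one {R : Type*} [Ring R] {s t : R} (h : s * t = t - s) :
    (1 - s) * (1 + t) = 1 := by
  rw [sub_mul, mul_add, mul_add, h, one_mul, one_mul, mul_one]
  abel

lemma one_add_mul_one_sub_eq_one {R : Type*} [Ring R] {s t : R} (h : t * s = t - s) :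
    (1 + t) * (1 - s) = 1 := by
  rw [add_mul, mul_sub, mul_sub, h, one_mul, one_mul, mul_one]
  abel

section Sandwich

variable {K V W : Type*} [Semiring K] [AddCommGroup V] [Module K V] [AddCommGroup W] [Module K W]

noncomputable def sandwichShift (Δ : V →ₗ[K] W) (Γ : W →ₗ[K] V) (d : ℕ) :
    (Module.End K V)[X] →+ (Module.End K W)[X] where
  toFun P := P.sum fun n e => monomial (n + d) (Δ ∘ₗ e ∘ₗ Γ)
  map_zero' := sum_zero_index _
  map_add' P Q := sum_add_index P Q _ (fun _ => by simp) fun _ _ _ => by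
    rw [LinearMap.add_comp, LinearMap.comp_add, map_add]

variable (Δ : V →ₗ[K] W) (Γ : W →ₗ[K] V) (d : ℕ)

@[simp]
lemma sandwichShift_monomial (n : ℕ) (e : Module.End K V) :
    sandwichShift Δ Γ d (monomial n e) = monomial (n + d) (Δ ∘ₗ e ∘ₗ Γ) :=
  sum_monomial_index (S := (Module.End K W)[X]) e (fun k e => monomial (k + d) (Δ ∘ₗ e ∘ₗ Γ))
    (by simp only [LinearMap.zero_comp, LinearMap.comp_zero, map_zero])

lemma sandwichShift_mul_sandwichShift (P Q : (Module.End K V)[X]) :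
    sandwichShift Δ Γ d P * sandwichShift Δ Γ d Q =
      sandwichShift Δ Γ d (P * monomial d (Γ ∘ₗ Δ) * Q) := by
  induction P using Polynomial.induction_on' with
  | add P₁ P₂ h₁ h₂ => simp only [map_add, add_mul, h₁, h₂]
  | monomial n e =>
    induction Q using Polynomial.induction_on' with
    | add Q₁ Q₂ h₁ h₂ => simp only [map_add, mul_add, h₁, h₂]
    | monomial m f =>
      simp only [sandwichShift_monomial, monomial_mul_monomial]
      rw [← add_assoc]
      rfl

lemma sandwichShift_geomSum_mul_geomSum (A B : Module.End K V) (M N : ℕ) :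
    sandwichShift Δ Γ d ((∑ j ∈ range M, monomial 1 A ^ j) * ∑ k ∈ range N, monomial 1 B ^ k) =
      ∑ j ∈ range M, ∑ k ∈ range N, C (Δ ∘ₗ (A ^ j * B ^ k) ∘ₗ Γ) * X ^ (j + k + d) := by
  simp only [sum_mul_sum, map_sum, monomial_pow, monomial_mul_monomial, one_mul,
    sandwichShift_monomial, C_mul_X_pow_eq_monomial]

end Sandwich

lemma monomial_one_pow_eq_zero {R : Type*} [Semiring R] {r : R} {n : ℕ} (h : r ^ n = 0) :
    monomial 1 r ^ n = 0 := by
  rw [monomial_pow, h, monomial_zero_right]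

theorem one_sub_map_inv_mul_one_add_map_inv {R S : Type*} [Ring R] [Ring S] (ψ : R →+ S)
    (a b : Rˣ) (hψ : ∀ x y, ψ x * ψ y = ψ (x * (↑a - ↑b) * y)) :
    (1 - ψ ↑a⁻¹) * (1 + ψ ↑b⁻¹) = 1 ∧ (1 + ψ ↑b⁻¹) * (1 - ψ ↑a⁻¹) = 1 :=
  ⟨one_sub_mul_one_add_eq_one (by rw [hψ, Units.inv_mul_sub_mul_inv, map_sub]),
    one_add_mul_one_sub_eq_one (by rw [hψ, Units.inv_mul_sub_mul_inv', map_sub])⟩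

theorem quiver_polynomial_inverse_general
    (V W : Type*) [AddCommGroup V] [Module ℂ V] [AddCommGroup W] [Module ℂ W]
    (A B : Module.End ℂ V) (Γ : W →ₗ[ℂ] V) (Δ : V →ₗ[ℂ] W)
    (N : ℕ) (hAN : A ^ N = 0) (hBN : B ^ N = 0)
    (hmm : B * A - A * B = Γ ∘ₗ Δ)
    (X Y : Polynomial (Module.End ℂ W))
    (hX : X = 1 - ∑ j ∈ Finset.range N, ∑ k ∈ Finset.range N,
      Polynomial.C ((Δ ∘ₗ ((A ^ j * B ^ k : Module.End ℂ V) : V →ₗ[ℂ] V)) ∘ₗ Γ) *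
        Polynomial.X ^ (j + k + 2))
    (hY : Y = 1 + ∑ j ∈ Finset.range N, ∑ k ∈ Finset.range N,
      Polynomial.C ((Δ ∘ₗ ((B ^ k * A ^ j : Module.End ℂ V) : V →ₗ[ℂ] V)) ∘ₗ Γ) *
        Polynomial.X ^ (j + k + 2)) :
    X * Y = 1 ∧ Y * X = 1 := by
  let u := Units.oneSubOfPowEqZero (monomial_one_pow_eq_zero hAN)
  let v := Units.oneSubOfPowEqZero (monomial_one_pow_eq_zero hBN)
  have hcomm : (↑(v * u) - ↑(u * v) : (Module.End ℂ V)[X]) = monomial 2 (Γ ∘ₗ Δ) := by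
    change (1 - monomial 1 B) * (1 - monomial 1 A) - (1 - monomial 1 A) * (1 - monomial 1 B) = _
    simp only [sub_mul, mul_sub, one_mul, mul_one, monomial_mul_monomial]
    rw [← hmm, monomial_sub]
    abel
  have hS : sandwichShift Δ Γ 2 ↑(v * u)⁻¹ = ∑ j ∈ range N, ∑ k ∈ range N,
      C ((Δ ∘ₗ (A ^ j * B ^ k)) ∘ₗ Γ) * Polynomial.X ^ (j + k + 2) :=
    sandwichShift_geomSum_mul_geomSum Δ Γ 2 A B N N
  have hT : sandwichShift Δ Γ 2 ↑(u * v)⁻¹ = ∑ j ∈ range N, ∑ k ∈ range N,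
      C ((Δ ∘ₗ (B ^ k * A ^ j)) ∘ₗ Γ) * Polynomial.X ^ (j + k + 2) :=
    (sandwichShift_geomSum_mul_geomSum Δ Γ 2 B A N N).trans <| sum_comm.trans <|
      sum_congr rfl fun j _ => sum_congr rfl fun k _ => by rw [add_comm k j]; rfl
  have hmul := sandwichShift_mul_sandwichShift Δ Γ 2
  rw [← hcomm] at hmul
  subst hX hY
  rw [← hS, ← hT]
  exact one_sub_map_inv_mul_one_add_map_inv (sandwichShift Δ Γ 2) (v * u) (u * v) hmul

/-- Lemma 4.6 of the paper: if `A, B` are nilpotent endomorphisms of `V` (with `A^N = B^N = 0`),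
`Γ : W → V`, `Δ : V → W`, and the moment-map equation `BA - AB = ΓΔ` holds, then the polynomials
`X(z) = id_W - Σ_{j,k ≥ 0} Δ A^j B^k Γ z^(j+k+2)` and
`Y(z) = id_W + Σ_{j,k ≥ 0} Δ B^k A^j Γ z^(j+k+2)` in `End(W)[z]` are two-sided inverses. -/
theorem quiver_polynomial_inverse
    (V W : Type*) [AddCommGroup V] [Module ℂ V] [AddCommGroup W] [Module ℂ W]
    [FiniteDimensional ℂ V] [FiniteDimensional ℂ W]
    (A B : Module.End ℂ V) (Γ : W →ₗ[ℂ] V) (Δ : V →ₗ[ℂ] W)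
    (hA : IsNilpotent A) (hB : IsNilpotent B)
    (N : ℕ) (hAN : A ^ N = 0) (hBN : B ^ N = 0)
    (hmm : B * A - A * B = Γ ∘ₗ Δ)
    (X Y : Polynomial (Module.End ℂ W))
    (hX : X = 1 - ∑ j ∈ Finset.range N, ∑ k ∈ Finset.range N,
      Polynomial.C ((Δ ∘ₗ ((A ^ j * B ^ k : Module.End ℂ V) : V →ₗ[ℂ] V)) ∘ₗ Γ) *
        Polynomial.X ^ (j + k + 2))
    (hY : Y = 1 + ∑ j ∈ Finset.range N, ∑ k ∈ Finset.range N,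
      Polynomial.C ((Δ ∘ₗ ((B ^ k * A ^ j : Module.End ℂ V) : V →ₗ[ℂ] V)) ∘ₗ Γ) *
        Polynomial.X ^ (j + k + 2)) :
    X * Y = 1 ∧ Y * X = 1 :=
  quiver_polynomial_inverse_general V W A B Γ Δ N hAN hBN hmm X Y hX hY
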